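/- Let g be the Grundy sequence for Maximum Nim with rule f(n) = ⌊(n-1)/2⌋. Then g(n) = 0 if and only if n = 0 or n is a power of 2. -/
import Mathlib


open Classical

noncomputable section

/-- The minimal excludant of a set of naturals. -/
def mex (S : Set ℕ) : ℕ := sInf {v | v ∉ S}

/-- A rule sequence is regular if `f 0 = 0`, `f n ≤ n`, and `f` increases by 0 or 1. -/
def Regular (f : ℕ → ℕ) : Prop :=
  f 0 = 0 ∧ (∀ n, f n ≤ n) ∧ ∀ n, f n ≤ f (n + 1) ∧ f (n + 1) ≤ f n + 1

/-- `g` is the Grundy sequence for Maximum Nim with rule `f`: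
`g n = mex { g (n - i) : 1 ≤ i ≤ f n }`. -/
def MaxNimGrundy (f g : ℕ → ℕ) : Prop :=
  ∀ n, g n = mex {v | ∃ i, 1 ≤ i ∧ i ≤ f n ∧ g (n - i) = v}

/-- `h` is the Grundy sequence for Minimum Nim with rule `f`:
`h n = mex { h i : 0 ≤ i ≤ n - f n - 1 }`. -/
def MinNimGrundy (f h : ℕ → ℕ) : Prop :=
  ∀ n, h n = mex {v | ∃ i, i + f n + 1 ≤ n ∧ h i = v}

/-- Every natural number occurs infinitely often. -/
def Infinitive (g : ℕ → ℕ) : Prop := ∀ k, {n | g n = k}.Infinite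

/-- The position of the first occurrence of `k` in `g`. -/
def firstOcc (g : ℕ → ℕ) (k : ℕ) : ℕ := sInf {n | g n = k}

/-- `n` is not the first occurrence of its value in `g`. -/
def NotFirst (g : ℕ → ℕ) (n : ℕ) : Prop := ∃ m < n, g m = g n

/-- The subsequence of `g` obtained by deleting the first occurrence of each value. -/
def Lam (g : ℕ → ℕ) : ℕ → ℕ := fun m => g (Nat.nth (NotFirst g) m)

/-- Kimberling's fractal sequences: infinitive, first occurrences in increasing
order of value (F2), and deleting first occurrences leaves the sequence unchanged (F3). -/
def Fractal (g : ℕ → ℕ) : Prop :=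
  Infinitive g ∧
  (∀ j k, j < k → firstOcc g j < firstOcc g k) ∧
  (∀ m, Lam g m = g m)

/-- The restriction `g|M`: the subsequence of terms of `g` lying in `M`. -/
def restrictSeq (g : ℕ → ℕ) (M : Set ℕ) : ℕ → ℕ :=
  fun m => g (Nat.nth (fun n => g n ∈ M) m)

/-- An interspersion: an infinitive sequence such that for `i < j` the restriction
`g|{i,j}` is an initial block of `i`'s followed by strict alternation `j, i, j, i, ...`. -/
def Interspersion (g : ℕ → ℕ) : Prop :=
  Infinitive g ∧ ∀ i j, i < j → ∃ N,
    (∀ n < N, restrictSeq g {i, j} n = i) ∧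
    ∀ n, restrictSeq g {i, j} (N + 2 * n) = j ∧
         restrictSeq g {i, j} (N + 2 * n + 1) = i

/-- `striangle g i j`: the number of occurrences of `i` strictly before the first
occurrence of `j`, not counting the occurrence `g 0 = 0` when `i = 0`. -/
def striangle (g : ℕ → ℕ) (i j : ℕ) : ℕ :=
  Set.ncard {n | g n = i ∧ n < firstOcc g j ∧ (i = 0 → n ≠ 0)}

/-- A subadditive triangle: `s i j + s j k - 1 ≤ s i k ≤ s i j + s j k` for `i < j < k`. -/
def SubadditiveTriangle (s : ℕ → ℕ → ℕ) : Prop :=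
  ∀ i j k, i < j → j < k →
    s i j + s j k ≤ s i k + 1 ∧ s i k ≤ s i j + s j k

def G : ℕ → ℕ
  | 0 => 0
  | 1 => 0
  | n + 2 =>
    if (n + 2) % 2 = 1 then (n + 2) / 2
    else G ((n + 2) / 2)
decreasing_by omega

lemma G_le2 {n : ℕ} (h : n ≤ 2) : G n = 0 := by
  interval_cases n <;> simp [G]

lemma G_odd {n : ℕ} (h : n % 2 = 1) : G n = n / 2 := by
  match n, h with
  | 1, _ => simp [G]
  | n + 2, h => rw [G, if_pos h]

lemma G_even {n : ℕ} (h : n % 2 = 0) (h2 : 2 ≤ n) : G n = G (n / 2) := by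
  match n, h2 with
  | n + 2, _ => rw [G, if_neg (by omega)]

lemma G_bound : ∀ n, 1 ≤ n → 2 * G n < n := by
  intro n
  induction n using Nat.strong_induction_on with
  | _ n IH =>
    intro h1
    rcases Nat.lt_or_ge n 3 with h | h
    · rw [G_le2 (by omega)]; omega
    · rcases Nat.mod_two_eq_zero_or_one n with he | ho
      · rw [G_even he (by omega)]
        have := IH (n / 2) (by omega) (by omega)
        omega
      · rw [G_odd ho]; omega

lemma G_inj : ∀ n a b, n / 2 < a → a < b → b ≤ n → G a ≠ G b := by
  intro n
  induction n using Nat.strong_induction_on with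
  | _ n IH =>
    intro a b ha hab hb
    have hn2 : 2 ≤ n := by omega
    have ha2 : 2 ≤ a := by omega
    rcases Nat.mod_two_eq_zero_or_one a with pa | pa <;>
      rcases Nat.mod_two_eq_zero_or_one b with pb | pb
    · -- both even
      rw [G_even pa (by omega), G_even pb (by omega)]
      exact IH (n / 2) (by omega) (a / 2) (b / 2) (by omega) (by omega) (by omega)
    · -- a even, b odd
      rw [G_even pa (by omega), G_odd pb]
      have h1 : 2 * G (a / 2) < a / 2 ∨ a / 2 = 0 := by
        rcases Nat.eq_zero_or_pos (a / 2) with h | h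
        · right; exact h
        · left; exact G_bound (a / 2) h
      omega
    · -- a odd, b even
      rw [G_odd pa, G_even pb (by omega)]
      have h1 : 2 * G (b / 2) < b / 2 := G_bound (b / 2) (by omega)
      omega
    · -- both odd
      rw [G_odd pa, G_odd pb]
      omega

lemma G_cov : ∀ n v, 2 * v < n → ∃ m, n / 2 < m ∧ m ≤ n ∧ G m = v := by
  intro n
  induction n using Nat.strong_induction_on with
  | _ n IH =>
    intro v hv
    rcases Nat.lt_or_ge n 3 with h | h
    · refine ⟨n, by omega, le_rfl, ?_⟩
      have : v = 0 := by omega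
      rw [this, G_le2 (by omega)]
    · rcases Nat.lt_or_ge (n / 2) (2 * v + 1) with h2 | h2
      · refine ⟨2 * v + 1, by omega, by omega, ?_⟩
        rw [G_odd (by omega)]; omega
      · obtain ⟨m, hm1, hm2, hm3⟩ := IH (n / 2) (by omega) v (by omega)
        refine ⟨2 * m, by omega, by omega, ?_⟩
        rw [G_even (by omega) (by omega)]
        rwa [Nat.mul_div_cancel_left m (by norm_num)]

lemma mex_eq_of (S : Set ℕ) (a : ℕ) (h1 : a ∉ S) (h2 : ∀ v, v < a → v ∈ S) :
    mex S = a := by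
  have hmem : sInf {v | v ∉ S} ∈ {v | v ∉ S} := Nat.sInf_mem ⟨a, h1⟩
  have hle : sInf {v | v ∉ S} ≤ a := Nat.sInf_le h1
  rcases eq_or_lt_of_le hle with h | h
  · exact h
  · exact absurd (h2 _ h) hmem

lemma G_zero_iff : ∀ n, G n = 0 ↔ n = 0 ∨ ∃ k, n = 2 ^ k := by
  intro n
  induction n using Nat.strong_induction_on with
  | _ n IH =>
    rcases Nat.lt_or_ge n 3 with h | h
    · interval_cases n
      · simp [G_le2]
      · simp [G_le2]
        exact ⟨0, rfl⟩
      · simp [G_le2]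
        exact ⟨1, rfl⟩
    · rcases Nat.mod_two_eq_zero_or_one n with pe | po
      · rw [G_even pe (by omega), IH (n / 2) (by omega)]
        constructor
        · rintro (h0 | ⟨k, hk⟩)
          · omega
          · exact Or.inr ⟨k + 1, by rw [pow_succ]; omega⟩
        · rintro (h0 | ⟨k, hk⟩)
          · omega
          · cases k with
            | zero => omega
            | succ j =>
              refine Or.inr ⟨j, ?_⟩
              rw [pow_succ] at hk; omega
      · rw [G_odd po]
        constructor
        · intro h0; omega
        · rintro (h0 | ⟨k, hk⟩)
          · omega
          · cases k with
            | zero => omega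
            | succ j =>
              exfalso
              rw [pow_succ] at hk; omega


/-- for the rule `f n = ⌊(n-1)/2⌋`, `g n = 0` iff `n` is zero or a
power of two. -/
theorem maxNim_half_rule_zeros (f g : ℕ → ℕ) (hf : ∀ n, f n = (n - 1) / 2)
    (hg : MaxNimGrundy f g) :
    ∀ n, g n = 0 ↔ n = 0 ∨ ∃ k, n = 2 ^ k := by
  have key : ∀ n, g n = G n := by
    intro n
    induction n using Nat.strong_induction_on with
    | _ n IH =>
      rw [hg n, hf n]
      apply mex_eq_of
      · rintro ⟨i, hi1, hi2, hi3⟩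
        have hmlt : n - i < n := by omega
        rw [IH _ hmlt] at hi3
        exact G_inj n (n - i) n (by omega) (by omega) le_rfl hi3
      · intro v hv
        have hn1 : 1 ≤ n := by
          by_contra h
          have : n = 0 := by omega
          rw [this, G_le2 (by omega)] at hv; omega
        have hb := G_bound n hn1
        obtain ⟨m, hm1, hm2, hm3⟩ := G_cov n v (by omega)
        have hmn : m ≠ n := by
          intro h; rw [h] at hm3; omega
        refine ⟨n - m, by omega, by omega, ?_⟩
        have : n - (n - m) = m := by omega
        rw [this, IH m (by omega), hm3]
  intro n
  rw [key n]
  exact G_zero_iff n
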